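/- Fix Q ∈ 𝒬_phy, let B_Q be the unique real symmetric traceless 3×3 matrix with ∫_{𝕊²} (m mᵀ − I/3) f_{B_Q} dσ = Q, and write f_Q = f_{B_Q}. Then for every probability density f on 𝕊² such that f ln f is σ-integrable and ∫_{𝕊²} (m mᵀ − I/3) f(m) dσ(m) = Q, one has ∫_{𝕊²} f ln f dσ ≥ ∫_{𝕊²} f_Q ln f_Q dσ, with equality if and only if f = f_Q σ-a.e.; that is, the Bingham density f_Q minimizes the entropy ∫ f ln f dσ among all probability densities with prescribed second moment Q. -/

import Mathlib

open MeasureTheory Real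

noncomputable section

abbrev E3 : Type := EuclideanSpace ℝ (Fin 3)
abbrev S2 : Type := Metric.sphere (0 : E3) 1
abbrev Mat3 : Type := Matrix (Fin 3) (Fin 3) ℝ

/-- The standard (rotation-invariant) surface measure on 𝕊², of total mass 4π. -/
noncomputable def sigma3 : Measure S2 := (volume : Measure E3).toSphere

/-- The quadratic form `m · B m` for `m ∈ 𝕊²`. -/
noncomputable def quadForm (B : Mat3) (m : S2) : ℝ :=
  ∑ i, ∑ j, (m : E3) i * B i j * (m : E3) j

/-- The Bingham partition function `Z_B = ∫ exp(m·Bm) dσ(m)`. -/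
noncomputable def ZB (B : Mat3) : ℝ := ∫ m : S2, Real.exp (quadForm B m) ∂sigma3

/-- The Bingham density `f_B(m) = exp(m·Bm)/Z_B`. -/
noncomputable def bingham (B : Mat3) (m : S2) : ℝ := Real.exp (quadForm B m) / ZB B

/-- The traceless second moment `∫ (m mᵀ − I/3) f dσ` of a density `f` on 𝕊². -/
noncomputable def secondMoment (f : S2 → ℝ) : Mat3 :=
  Matrix.of fun i j =>
    ∫ m : S2, ((m : E3) i * (m : E3) j - (if i = j then (1 : ℝ) / 3 else 0)) * f m ∂sigma3

/-- `Q ∈ 𝒬_phy`: symmetric, traceless, with all eigenvalues in `(−1/3, 2/3)`. -/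
def Qphy (Q : Mat3) : Prop :=
  Q.IsSymm ∧ Q.trace = 0 ∧ ∀ μ ∈ spectrum ℝ Q, -(1 / 3 : ℝ) < μ ∧ μ < 2 / 3

/-! The moment constraint fixes `∫ f · m·Bm dσ`, and `log f_B = m·Bm − log Z_B`, so
`∫ f log f_B = ∫ f_B log f_B` for every admissible `f`. Gibbs' inequality
`∫ f log f − ∫ f log g = ∫ g · klFun (f / g) ≥ 0`, with equality iff `f = g` a.e.
because `klFun` vanishes only at `1`, then finishes the proof. -/

open InformationTheory

section Gibbs

variable {α : Type*} [MeasurableSpace α] {μ : Measure α} {f g : α → ℝ}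

lemma mul_log_sub_mul_log_sub_add_eq_mul_klFun {a b : ℝ} (hb : 0 < b) :
    a * log a - a * log b - a + b = b * klFun (a / b) := by
  rw [klFun_apply]
  rcases eq_or_ne a 0 with rfl | ha
  · simp
  · rw [log_div ha hb.ne']
    field_simp
    ring

lemma mul_klFun_div_nonneg {a b : ℝ} (ha : 0 ≤ a) (hb : 0 < b) : 0 ≤ b * klFun (a / b) :=
  mul_nonneg hb.le (klFun_nonneg (div_nonneg ha hb.le))

lemma ae_mul_log_sub_mul_log_sub_add_eq_mul_klFun (hg : ∀ᵐ x ∂μ, 0 < g x) :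
    (fun x => f x * log (f x) - f x * log (g x) - f x + g x)
      =ᵐ[μ] fun x => g x * klFun (f x / g x) := by
  filter_upwards [hg] with x hx
  exact mul_log_sub_mul_log_sub_add_eq_mul_klFun hx

lemma integrable_mul_klFun_div (hg : ∀ᵐ x ∂μ, 0 < g x) (hfi : Integrable f μ)
    (hgi : Integrable g μ) (hflogf : Integrable (fun x => f x * log (f x)) μ)
    (hflogg : Integrable (fun x => f x * log (g x)) μ) :
    Integrable (fun x => g x * klFun (f x / g x)) μ :=
  (((hflogf.sub hflogg).sub hfi).add hgi).congr (ae_mul_log_sub_mul_log_sub_add_eq_mul_klFun hg)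

lemma integral_mul_log_sub_integral_mul_log (hg : ∀ᵐ x ∂μ, 0 < g x) (hfi : Integrable f μ)
    (hgi : Integrable g μ) (hflogf : Integrable (fun x => f x * log (f x)) μ)
    (hflogg : Integrable (fun x => f x * log (g x)) μ) (hmass : ∫ x, f x ∂μ = ∫ x, g x ∂μ) :
    ∫ x, f x * log (f x) ∂μ - ∫ x, f x * log (g x) ∂μ = ∫ x, g x * klFun (f x / g x) ∂μ := by
  have hdiff : Integrable (fun x => f x * log (f x) - f x * log (g x)) μ := hflogf.sub hflogg
  have hdiff' : Integrable (fun x => f x * log (f x) - f x * log (g x) - f x) μ := hdiff.sub hfi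
  rw [← integral_congr_ae (ae_mul_log_sub_mul_log_sub_add_eq_mul_klFun hg),
    integral_add hdiff' hgi, integral_sub hdiff hfi, integral_sub hflogf hflogg, hmass]
  ring

lemma integral_mul_log_le_integral_mul_log (hf : 0 ≤ᵐ[μ] f) (hg : ∀ᵐ x ∂μ, 0 < g x)
    (hfi : Integrable f μ) (hgi : Integrable g μ)
    (hflogf : Integrable (fun x => f x * log (f x)) μ)
    (hflogg : Integrable (fun x => f x * log (g x)) μ) (hmass : ∫ x, f x ∂μ = ∫ x, g x ∂μ) :
    ∫ x, f x * log (g x) ∂μ ≤ ∫ x, f x * log (f x) ∂μ := by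
  rw [← sub_nonneg, integral_mul_log_sub_integral_mul_log hg hfi hgi hflogf hflogg hmass]
  refine integral_nonneg_of_ae ?_
  filter_upwards [hf, hg] with x hfx hgx
  exact mul_klFun_div_nonneg hfx hgx

lemma integral_mul_log_eq_integral_mul_log_iff (hf : 0 ≤ᵐ[μ] f) (hg : ∀ᵐ x ∂μ, 0 < g x)
    (hfi : Integrable f μ) (hgi : Integrable g μ)
    (hflogf : Integrable (fun x => f x * log (f x)) μ)
    (hflogg : Integrable (fun x => f x * log (g x)) μ) (hmass : ∫ x, f x ∂μ = ∫ x, g x ∂μ) :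
    ∫ x, f x * log (f x) ∂μ = ∫ x, f x * log (g x) ∂μ ↔ f =ᵐ[μ] g := by
  have hnonneg : 0 ≤ᵐ[μ] fun x => g x * klFun (f x / g x) := by
    filter_upwards [hf, hg] with x hfx hgx
    exact mul_klFun_div_nonneg hfx hgx
  rw [← sub_eq_zero, integral_mul_log_sub_integral_mul_log hg hfi hgi hflogf hflogg hmass,
    integral_eq_zero_iff_of_nonneg_ae hnonneg
      (integrable_mul_klFun_div hg hfi hgi hflogf hflogg)]
  refine ⟨fun h => ?_, fun h => ?_⟩
  · filter_upwards [h, hf, hg] with x hx hfx hgx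
    have hratio : f x / g x = 1 := (klFun_eq_zero_iff (div_nonneg hfx hgx.le)).mp
      ((mul_eq_zero.mp hx).resolve_left hgx.ne')
    exact (div_eq_one_iff_eq hgx.ne').mp hratio
  · filter_upwards [h, hg] with x hx hgx
    simp [hx, div_self hgx.ne', klFun_one]

end Gibbs

theorem MeasureTheory.Integrable.mul_continuous {X : Type*} [TopologicalSpace X] [CompactSpace X]
    [T2Space X] [MeasurableSpace X] [OpensMeasurableSpace X] {μ : Measure X} {h φ : X → ℝ}
    (hh : Integrable h μ) (hφ : Continuous φ) : Integrable (fun x => h x * φ x) μ :=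
  integrableOn_univ.mp (hh.integrableOn.mul_continuousOn hφ.continuousOn isCompact_univ)

instance : IsFiniteMeasure sigma3 := inferInstanceAs (IsFiniteMeasure (volume : Measure E3).toSphere)

instance : NeZero sigma3 := ⟨Measure.toSphere_ne_zero _⟩

lemma continuous_quadForm (B : Mat3) : Continuous (quadForm B) := by
  unfold quadForm
  fun_prop

lemma integral_mul_quadForm (B : Mat3) {h : S2 → ℝ} (hh : Integrable h sigma3) :
    ∫ m, h m * quadForm B m ∂sigma3 =
      ∑ i, ∑ j, B i j * ∫ m, h m * ((m : E3) i * (m : E3) j) ∂sigma3 := by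
  have hcoord (i j : Fin 3) : Integrable (fun m : S2 => h m * ((m : E3) i * (m : E3) j)) sigma3 :=
    hh.mul_continuous (by fun_prop)
  have hexpand : ∀ m, h m * quadForm B m =
      ∑ i, ∑ j, B i j * (h m * ((m : E3) i * (m : E3) j)) := by
    intro m
    simp only [quadForm, Finset.mul_sum]
    exact Finset.sum_congr rfl fun i _ => Finset.sum_congr rfl fun j _ => by ring
  simp_rw [hexpand]
  refine (integral_finsetSum _ fun i _ =>
    integrable_finsetSum _ fun j _ => (hcoord i j).const_mul _).trans ?_
  refine Finset.sum_congr rfl fun i _ => ?_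
  refine (integral_finsetSum _ fun j _ => (hcoord i j).const_mul _).trans ?_
  simp_rw [integral_const_mul]

lemma integral_mul_coord_mul_coord {h : S2 → ℝ} (hh : Integrable h sigma3) (i j : Fin 3) :
    ∫ m, h m * ((m : E3) i * (m : E3) j) ∂sigma3 =
      secondMoment h i j + (if i = j then (1 : ℝ) / 3 else 0) * ∫ m, h m ∂sigma3 := by
  have hcoord : Integrable (fun m : S2 => h m * ((m : E3) i * (m : E3) j)) sigma3 :=
    hh.mul_continuous (by fun_prop)
  simp_rw [secondMoment, Matrix.of_apply, sub_mul]
  rw [integral_sub (by simpa only [mul_comm] using hcoord) (hh.const_mul _), integral_const_mul]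
  simp_rw [mul_comm (h _)]
  ring

lemma integral_mul_quadForm_congr (B : Mat3) {f g : S2 → ℝ} (hfi : Integrable f sigma3)
    (hgi : Integrable g sigma3) (hmass : ∫ m, f m ∂sigma3 = ∫ m, g m ∂sigma3)
    (hmom : secondMoment f = secondMoment g) :
    ∫ m, f m * quadForm B m ∂sigma3 = ∫ m, g m * quadForm B m ∂sigma3 := by
  simp only [integral_mul_quadForm B hfi, integral_mul_quadForm B hgi,
    integral_mul_coord_mul_coord hfi, integral_mul_coord_mul_coord hgi, hmass, hmom]

lemma continuous_bingham (B : Mat3) : Continuous (bingham B) :=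
  (continuous_quadForm B).rexp.div_const _

lemma ZB_pos (B : Mat3) : 0 < ZB B :=
  integral_exp_pos ((continuous_quadForm B).rexp.integrable_of_hasCompactSupport
    (.of_compactSpace _))

lemma bingham_pos (B : Mat3) (m : S2) : 0 < bingham B m :=
  div_pos (exp_pos _) (ZB_pos B)

lemma integral_bingham (B : Mat3) : ∫ m, bingham B m ∂sigma3 = 1 := by
  unfold bingham
  rw [integral_div]
  exact div_self (ZB_pos B).ne'

lemma log_bingham (B : Mat3) (m : S2) : log (bingham B m) = quadForm B m - log (ZB B) := by
  unfold bingham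
  rw [log_div (exp_ne_zero _) (ZB_pos B).ne', log_exp]

lemma continuous_log_bingham (B : Mat3) : Continuous fun m => log (bingham B m) := by
  simp_rw [log_bingham]
  exact (continuous_quadForm B).sub continuous_const

lemma integral_mul_log_bingham_congr (B : Mat3) {f g : S2 → ℝ} (hfi : Integrable f sigma3)
    (hgi : Integrable g sigma3) (hmass : ∫ m, f m ∂sigma3 = ∫ m, g m ∂sigma3)
    (hmom : secondMoment f = secondMoment g) :
    ∫ m, f m * log (bingham B m) ∂sigma3 = ∫ m, g m * log (bingham B m) ∂sigma3 := by
  have hsplit {h : S2 → ℝ} (hh : Integrable h sigma3) : ∫ m, h m * log (bingham B m) ∂sigma3 =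
      ∫ m, h m * quadForm B m ∂sigma3 - log (ZB B) * ∫ m, h m ∂sigma3 := by
    simp_rw [log_bingham, mul_sub]
    rw [integral_sub (hh.mul_continuous (continuous_quadForm B)) (hh.mul_const _),
      integral_mul_const, mul_comm]
  rw [hsplit hfi, hsplit hgi, integral_mul_quadForm_congr B hfi hgi hmass hmom, hmass]

theorem stmt19_general (Q : Mat3)
    (BQ : Mat3)
    (hBQ : secondMoment (bingham BQ) = Q)
    (f : S2 → ℝ)
    (hpos : ∀ᵐ m ∂sigma3, 0 ≤ f m) (hprob : ∫ m, f m ∂sigma3 = 1)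
    (hent : Integrable (fun m => f m * Real.log (f m)) sigma3)
    (hmom : secondMoment f = Q) :
    (∫ m, bingham BQ m * Real.log (bingham BQ m) ∂sigma3) ≤
        ∫ m, f m * Real.log (f m) ∂sigma3 ∧
    ((∫ m, f m * Real.log (f m) ∂sigma3) =
        (∫ m, bingham BQ m * Real.log (bingham BQ m) ∂sigma3) ↔
      f =ᵐ[sigma3] bingham BQ) := by
  have hfi : Integrable f sigma3 := .of_integral_ne_zero (by rw [hprob]; exact one_ne_zero)
  have hgi : Integrable (bingham BQ) sigma3 :=
    (continuous_bingham BQ).integrable_of_hasCompactSupport (.of_compactSpace _)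
  have hmass : ∫ m, f m ∂sigma3 = ∫ m, bingham BQ m ∂sigma3 := by rw [hprob, integral_bingham]
  have hcross := integral_mul_log_bingham_congr BQ hfi hgi hmass (hmom.trans hBQ.symm)
  have hflogg := hfi.mul_continuous (continuous_log_bingham BQ)
  have hg : ∀ᵐ m ∂sigma3, 0 < bingham BQ m := .of_forall (bingham_pos BQ)
  rw [← hcross]
  exact ⟨integral_mul_log_le_integral_mul_log hpos hg hfi hgi hent hflogg hmass,
    integral_mul_log_eq_integral_mul_log_iff hpos hg hfi hgi hent hflogg hmass⟩

/-- The Bingham density `f_Q = f_{B_Q}` minimizes the entropy `∫ f ln f dσ` among all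
probability densities on 𝕊² with prescribed traceless second moment `Q ∈ 𝒬_phy`, and it
is the unique (up to σ-a.e. equality) minimizer. -/
theorem stmt19 (Q : Mat3) (hQ : Qphy Q)
    (BQ : Mat3) (hB1 : BQ.IsSymm) (hB2 : BQ.trace = 0)
    (hBQ : secondMoment (bingham BQ) = Q)
    (f : S2 → ℝ) (hf : Measurable f)
    (hpos : ∀ᵐ m ∂sigma3, 0 ≤ f m) (hprob : ∫ m, f m ∂sigma3 = 1)
    (hent : Integrable (fun m => f m * Real.log (f m)) sigma3)
    (hmom : secondMoment f = Q) :
    (∫ m, bingham BQ m * Real.log (bingham BQ m) ∂sigma3) ≤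
        ∫ m, f m * Real.log (f m) ∂sigma3 ∧
    ((∫ m, f m * Real.log (f m) ∂sigma3) =
        (∫ m, bingham BQ m * Real.log (bingham BQ m) ∂sigma3) ↔
      f =ᵐ[sigma3] bingham BQ) :=
  stmt19_general Q BQ hBQ f hpos hprob hent hmom
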